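/- Suppose (x*,y*,z*,λ*,γ*) is a strictly complementary KKT solution: Hx*+c+λ*−γ*=0, x*+y*=e, x*−z*=−e, p*=(y*,z*) ≥ 0, ω*=(λ*,γ*) ≥ 0, pᵢ*ωᵢ* = 0 for all i ∈ {1,…,2n}, and pᵢ* + ωᵢ* > 0 for all i. Let B = {i : pᵢ* > 0} and S = {i : ωᵢ* > 0}. Then for every ρ ∈ (0,1) and every strictly feasible point (x,y,z,λ,γ) with p=(y,z), ω=(λ,γ), gap μ = pᵀω/(2n), satisfying pᵢωᵢ > ρμ for all i, the following hold: (i) for every i ∈ S, 0 < pᵢ ≤ 2nμ/ωᵢ* and ωᵢ ≥ ρωᵢ*/(2n); (ii) for every i ∈ B, 0 < ωᵢ ≤ 2nμ/pᵢ* and pᵢ ≥ ρpᵢ*/(2n). -/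

import Mathlib

/-! Subtracting the KKT equations from those of the feasible point gives
`Δy = -Δx`, `Δz = Δx` and `H Δx = Δγ - Δλ`, so `Δp ⬝ Δω = Δx ⬝ H Δx ≥ 0`.
Expanding and using `p* ⬝ ω* = 0` bounds the cross terms: `p ⬝ ω* + p* ⬝ ω ≤ p ⬝ ω = 2nμ`.
Each nonnegative summand `pᵢ ωᵢ*` is then at most `2nμ`, which is the upper bound on `pᵢ`;
multiplying it with `ρμ < pᵢ ωᵢ` gives the lower bound on `ωᵢ`. Part (ii) is part (i) with
the roles of `p` and `ω` exchanged. -/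

open scoped BigOperators

noncomputable section

/-- Euclidean dot product of two vectors. -/
def dotp {ι : Type*} [Fintype ι] (u v : ι → ℝ) : ℝ := ∑ i, u i * v i

/-- Euclidean norm of a vector. -/
def enorm {ι : Type*} [Fintype ι] (u : ι → ℝ) : ℝ := Real.sqrt (∑ i, (u i) ^ 2)

/-- Strict feasibility for the box-constrained QP KKT system. -/
def StrictlyFeasible {n : ℕ} (H : Matrix (Fin n) (Fin n) ℝ)
    (c x y z lam gam : Fin n → ℝ) : Prop :=
  H.mulVec x + c + lam - gam = 0 ∧
  x + y = (fun _ => 1) ∧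
  x - z = (fun _ => -1) ∧
  (∀ i, 0 < y i) ∧ (∀ i, 0 < z i) ∧ (∀ i, 0 < lam i) ∧ (∀ i, 0 < gam i)

/-- The central-path neighborhood `N₂(θ)`. -/
def N2 {n : ℕ} (H : Matrix (Fin n) (Fin n) ℝ) (c : Fin n → ℝ) (θ : ℝ)
    (x y z lam gam : Fin n → ℝ) : Prop :=
  StrictlyFeasible H c x y z lam gam ∧
  _root_.enorm (Sum.elim y z * Sum.elim lam gam
      - fun _ => dotp (Sum.elim y z) (Sum.elim lam gam) / (2 * (n : ℝ)))
    ≤ θ * (dotp (Sum.elim y z) (Sum.elim lam gam) / (2 * (n : ℝ)))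

/-- First-derivative direction of the arc at a point `(x,y,z,λ,γ)`. -/
def FirstDir {n : ℕ} (H : Matrix (Fin n) (Fin n) ℝ)
    (y z lam gam xd yd zd ld gd : Fin n → ℝ) : Prop :=
  H.mulVec xd + ld - gd = 0 ∧ yd = -xd ∧ zd = xd ∧
  lam * yd + y * ld = lam * y ∧ gam * zd + z * gd = gam * z

/-- Second-derivative direction of the arc at a point `(x,y,z,λ,γ)`. -/
def SecondDir {n : ℕ} (H : Matrix (Fin n) (Fin n) ℝ)
    (y z lam gam yd zd ld gd xdd ydd zdd ldd gdd : Fin n → ℝ) : Prop :=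
  H.mulVec xdd + ldd - gdd = 0 ∧ ydd = -xdd ∧ zdd = xdd ∧
  lam * ydd + y * ldd = (-2 : ℝ) • (ld * yd) ∧
  gam * zdd + z * gdd = (-2 : ℝ) • (gd * zd)

/-- The ellipse (arc) approximation point: `v(α) = v - v̇·sin α + v̈·(1 - cos α)`. -/
def arc {n : ℕ} (v vd vdd : Fin n → ℝ) (α : ℝ) : Fin n → ℝ :=
  v - Real.sin α • vd + (1 - Real.cos α) • vdd

/-- Corrector (centering) direction at a point `(x,y,z,λ,γ)` with target `μ`. -/
def CorrDir {n : ℕ} (H : Matrix (Fin n) (Fin n) ℝ)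
    (y z lam gam dx dy dz dl dg : Fin n → ℝ) (mu : ℝ) : Prop :=
  H.mulVec dx + dl - dg = 0 ∧ dy = -dx ∧ dz = dx ∧
  lam * dy + y * dl = (fun _ => mu) - lam * y ∧
  gam * dz + z * dg = (fun _ => mu) - gam * z

theorem dotp_eq_dotProduct {ι : Type*} [Fintype ι] (u v : ι → ℝ) : dotp u v = u ⬝ᵥ v := rfl

theorem dotp_sub_sub_nonneg_of_kkt_eqs {n : ℕ} {H : Matrix (Fin n) (Fin n) ℝ}
    (hH : H.PosSemidef) {c x y z lam gam xs ys zs ls gs : Fin n → ℝ}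
    (hx : H.mulVec x + c + lam - gam = 0) (hxs : H.mulVec xs + c + ls - gs = 0)
    (hy : x + y = (fun _ => 1)) (hys : xs + ys = (fun _ => 1))
    (hz : x - z = (fun _ => -1)) (hzs : xs - zs = (fun _ => -1)) :
    0 ≤ dotp (Sum.elim y z - Sum.elim ys zs) (Sum.elim lam gam - Sum.elim ls gs) := by
  have hΔy : y - ys = -(x - xs) := by linear_combination hy - hys
  have hΔz : z - zs = x - xs := by linear_combination hzs - hz
  have hΔHx : H.mulVec (x - xs) = (gam - gs) - (lam - ls) := by
    rw [Matrix.mulVec_sub]; linear_combination hx - hxs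
  have hquad : dotp (Sum.elim y z - Sum.elim ys zs) (Sum.elim lam gam - Sum.elim ls gs)
      = (x - xs) ⬝ᵥ (H.mulVec (x - xs)) := by
    rw [dotp_eq_dotProduct, ← Sum.elim_sub_sub, ← Sum.elim_sub_sub,
      sumElim_dotProduct_sumElim, hΔy, hΔz, hΔHx]
    simp only [neg_dotProduct, dotProduct_sub]
    ring
  simpa [hquad] using hH.dotProduct_mulVec_nonneg (x - xs)

theorem dotp_comm {ι : Type*} [Fintype ι] (u v : ι → ℝ) : dotp u v = dotp v u :=
  dotProduct_comm u v

theorem dotp_add_dotp_le_of_sub_nonneg {ι : Type*} [Fintype ι] {p w ps ws : ι → ℝ}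
    (h : 0 ≤ dotp (p - ps) (w - ws)) : dotp p ws + dotp ps w ≤ dotp p w + dotp ps ws := by
  simp only [dotp_eq_dotProduct, sub_dotProduct, dotProduct_sub] at h ⊢
  linarith

theorem mul_le_dotp {ι : Type*} [Fintype ι] {u v : ι → ℝ} (hu : ∀ i, 0 ≤ u i)
    (hv : ∀ i, 0 ≤ v i) (i : ι) : u i * v i ≤ dotp u v :=
  Finset.single_le_sum (fun j _ => mul_nonneg (hu j) (hv j)) (Finset.mem_univ i)

theorem dotp_nonneg {ι : Type*} [Fintype ι] {u v : ι → ℝ} (hu : ∀ i, 0 ≤ u i)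
    (hv : ∀ i, 0 ≤ v i) : 0 ≤ dotp u v :=
  Finset.sum_nonneg fun j _ => mul_nonneg (hu j) (hv j)

theorem bounds_of_dotp_le {ι : Type*} [Fintype ι] {p w ws : ι → ℝ}
    (hp : ∀ i, 0 < p i) (hw : ∀ i, 0 < w i) (hws : ∀ i, 0 ≤ ws i)
    {ρ μ N : ℝ} (hN : 0 < N) (hμ : dotp p w = N * μ) (hgap : dotp p ws ≤ dotp p w)
    (hprox : ∀ i, ρ * μ < p i * w i) (i : ι) (hi : 0 < ws i) :
    0 < p i ∧ p i ≤ N * μ / ws i ∧ ρ * ws i / N ≤ w i := by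
  have hpw : p i * w i ≤ dotp p w := mul_le_dotp (fun j => (hp j).le) (fun j => (hw j).le) i
  have hμpos : 0 < μ :=
    pos_of_mul_pos_right (hμ ▸ (mul_pos (hp i) (hw i)).trans_le hpw) hN.le
  have hpws : p i * ws i ≤ N * μ := by
    linarith [mul_le_dotp (fun j => (hp j).le) hws i]
  refine ⟨hp i, (le_div_iff₀ hi).2 hpws, (div_le_iff₀ hN).2 ?_⟩
  have hscaled : ρ * ws i * μ < w i * N * μ :=
    calc ρ * ws i * μ = ws i * (ρ * μ) := by ring
      _ < ws i * (p i * w i) := mul_lt_mul_of_pos_left (hprox i) hi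
      _ = p i * ws i * w i := by ring
      _ ≤ N * μ * w i := mul_le_mul_of_nonneg_right hpws (hw i).le
      _ = w i * N * μ := by ring
  exact (lt_of_mul_lt_mul_right hscaled hμpos.le).le

theorem stmt_19_general {n : ℕ} (H : Matrix (Fin n) (Fin n) ℝ) (hH : H.PosDef)
    (c : Fin n → ℝ)
    (xs ys zs ls gs : Fin n → ℝ)
    (ps ws : Fin n ⊕ Fin n → ℝ)
    (hps : ps = Sum.elim ys zs) (hws : ws = Sum.elim ls gs)
    (h1 : H.mulVec xs + c + ls - gs = 0)
    (h2 : xs + ys = (fun _ => 1)) (h3 : xs - zs = (fun _ => -1))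
    (h4 : ∀ i, 0 ≤ ps i) (h5 : ∀ i, 0 ≤ ws i)
    (h6 : ∀ i, ps i * ws i = 0)
    (ρ : ℝ)
    (x y z lam gam : Fin n → ℝ)
    (hsf : StrictlyFeasible H c x y z lam gam)
    (p w : Fin n ⊕ Fin n → ℝ)
    (hp : p = Sum.elim y z) (hw : w = Sum.elim lam gam)
    (μ : ℝ) (hμ : μ = dotp p w / (2 * (n : ℝ)))
    (hprox : ∀ i, ρ * μ < p i * w i) :
    (∀ i, 0 < ws i →
      0 < p i ∧ p i ≤ 2 * (n : ℝ) * μ / ws i ∧ ρ * ws i / (2 * (n : ℝ)) ≤ w i) ∧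
    (∀ i, 0 < ps i →
      0 < w i ∧ w i ≤ 2 * (n : ℝ) * μ / ps i ∧ ρ * ps i / (2 * (n : ℝ)) ≤ p i) := by
  obtain ⟨hx, hy, hz, hypos, hzpos, hlpos, hgpos⟩ := hsf
  have hppos : ∀ i, 0 < p i := by rintro (i | i) <;> simp [hp, hypos i, hzpos i]
  have hwpos : ∀ i, 0 < w i := by rintro (i | i) <;> simp [hw, hlpos i, hgpos i]
  have hcompl : dotp ps ws = 0 := Finset.sum_eq_zero fun i _ => h6 i
  have hmono : 0 ≤ dotp (p - ps) (w - ws) := by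
    subst hp hw hps hws
    exact dotp_sub_sub_nonneg_of_kkt_eqs hH.posSemidef hx h1 hy h2 hz h3
  have hcross := dotp_add_dotp_le_of_sub_nonneg hmono
  have hpws := dotp_nonneg (fun i => (hppos i).le) h5
  have hpsw := dotp_nonneg h4 (fun i => (hwpos i).le)
  have hN : ∀ _ : Fin n ⊕ Fin n, (0 : ℝ) < 2 * n := fun i => by
    have : 0 < n := i.elim Fin.pos Fin.pos
    positivity
  have hdot : ∀ i, dotp p w = 2 * (n : ℝ) * μ := fun i => by
    rw [hμ, mul_div_cancel₀ _ (hN i).ne']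
  constructor
  · intro i hi
    exact bounds_of_dotp_le hppos hwpos h5 (hN i) (hdot i) (by linarith) hprox i hi
  · intro i hi
    exact bounds_of_dotp_le hwpos hppos h4 (hN i) ((dotp_comm w p).trans (hdot i))
      (by rw [dotp_comm w ps, dotp_comm w p]; linarith)
      (fun j => mul_comm (p j) (w j) ▸ hprox j) i hi

/-- near a strictly complementary KKT solution, componentwise bounds
hold for all strictly feasible points staying near the central path. -/
theorem stmt_19 {n : ℕ} (hn : 0 < n) (H : Matrix (Fin n) (Fin n) ℝ) (hH : H.PosDef)
    (c : Fin n → ℝ)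
    (xs ys zs ls gs : Fin n → ℝ)
    (ps ws : Fin n ⊕ Fin n → ℝ)
    (hps : ps = Sum.elim ys zs) (hws : ws = Sum.elim ls gs)
    (h1 : H.mulVec xs + c + ls - gs = 0)
    (h2 : xs + ys = (fun _ => 1)) (h3 : xs - zs = (fun _ => -1))
    (h4 : ∀ i, 0 ≤ ps i) (h5 : ∀ i, 0 ≤ ws i)
    (h6 : ∀ i, ps i * ws i = 0) (h7 : ∀ i, 0 < ps i + ws i)
    (ρ : ℝ) (hρ : ρ ∈ Set.Ioo (0 : ℝ) 1)
    (x y z lam gam : Fin n → ℝ)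
    (hsf : StrictlyFeasible H c x y z lam gam)
    (p w : Fin n ⊕ Fin n → ℝ)
    (hp : p = Sum.elim y z) (hw : w = Sum.elim lam gam)
    (μ : ℝ) (hμ : μ = dotp p w / (2 * (n : ℝ)))
    (hprox : ∀ i, ρ * μ < p i * w i) :
    (∀ i, 0 < ws i →
      0 < p i ∧ p i ≤ 2 * (n : ℝ) * μ / ws i ∧ ρ * ws i / (2 * (n : ℝ)) ≤ w i) ∧
    (∀ i, 0 < ps i →
      0 < w i ∧ w i ≤ 2 * (n : ℝ) * μ / ps i ∧ ρ * ps i / (2 * (n : ℝ)) ≤ p i) :=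
  stmt_19_general H hH c xs ys zs ls gs ps ws hps hws h1 h2 h3 h4 h5 h6 ρ x y z lam gam hsf p w hp
    hw μ hμ hprox

end
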